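/- There exists a permutation σ of Fin 3 × Fin 3 such that the matrix (1/3)·(F₃⊗F₃)·P_σ, where P_σ is the permutation matrix of σ and F₃ is the (unnormalized) Fourier matrix of order 3 with entries (F₃)_{jk} = exp(2πi·jk/3), is 2-unitary: it, its reshuffling and its partial transpose are all unitary. That is, there exists a 2-unitary complex Hadamard matrix of order 9. -/

import Mathlib

open Matrix Complex BigOperators

noncomputable section

/-- Reshuffling: `X^R_{(j,k),(l,m)} = X_{(j,l),(k,m)}`. -/
def reshuffle {d : ℕ} (X : Matrix (Fin d × Fin d) (Fin d × Fin d) ℂ) :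
    Matrix (Fin d × Fin d) (Fin d × Fin d) ℂ :=
  fun p q => X (p.1, q.1) (p.2, q.2)

/-- Partial transpose: `X^Γ_{(j,k),(l,m)} = X_{(j,m),(l,k)}`. -/
def ptranspose {d : ℕ} (X : Matrix (Fin d × Fin d) (Fin d × Fin d) ℂ) :
    Matrix (Fin d × Fin d) (Fin d × Fin d) ℂ :=
  fun p q => X (p.1, q.2) (q.1, p.2)

def IsUnitary {n : Type*} [Fintype n] [DecidableEq n] (M : Matrix n n ℂ) : Prop :=
  M ∈ Matrix.unitaryGroup n ℂ
/-- Kronecker product with index convention `(V⊗W)_{(j,k),(l,m)} = V_{jl} W_{km}`. -/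
def kron {d : ℕ} (A B : Matrix (Fin d) (Fin d) ℂ) :
    Matrix (Fin d × Fin d) (Fin d × Fin d) ℂ :=
  fun p q => A p.1 q.1 * B p.2 q.2

/-- The unnormalized Fourier matrix of order 3: `(F₃)_{jk} = exp(2πi·jk/3)`. -/
def F3 : Matrix (Fin 3) (Fin 3) ℂ :=
  fun j k => Complex.exp (2 * (Real.pi : ℂ) * Complex.I * (j.val : ℂ) * (k.val : ℂ) / 3)

/-- The permutation matrix of a permutation `σ` of `Fin 3 × Fin 3`. -/
def permMatrix (σ : Equiv.Perm (Fin 3 × Fin 3)) :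
    Matrix (Fin 3 × Fin 3) (Fin 3 × Fin 3) ℂ :=
  fun p q => if p = σ q then 1 else 0

namespace CHM9aux

noncomputable def ω : ℂ := Complex.exp (2 * (Real.pi:ℂ) * Complex.I / 3)

lemma ω_pow (n : ℕ) : ω ^ n = Complex.exp (2 * (Real.pi:ℂ) * Complex.I * n / 3) := by
  rw [ω, ← Complex.exp_nat_mul]
  congr 1
  ring

lemma ω3 : ω ^ 3 = 1 := by
  rw [ω_pow, show 2*(Real.pi:ℂ)*Complex.I*((3:ℕ):ℂ)/3 = 2*Real.pi*Complex.I by push_cast; ring,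
    Complex.exp_two_pi_mul_I]

lemma ω_ne : ω ≠ 1 := by
  intro h
  rw [ω, Complex.exp_eq_one_iff] at h
  obtain ⟨n, hn⟩ := h
  have h2 : (2*(Real.pi:ℂ)*Complex.I) ≠ 0 := by
    simp [Real.pi_ne_zero, Complex.I_ne_zero, Complex.ofReal_ne_zero]
  field_simp at hn
  have h4 : (1:ℂ) * (2*(Real.pi:ℂ)*Complex.I) = ((n:ℂ)*3) * (2*(Real.pi:ℂ)*Complex.I) := by
    linear_combination (2*(Real.pi:ℂ)*Complex.I) * hn
  have h5 : (1:ℂ) = (n:ℂ)*3 := mul_right_cancel₀ h2 h4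
  have : (1:ℤ) = n*3 := by exact_mod_cast h5
  omega

lemma hsum : 1 + ω + ω^2 = 0 := by
  have h : (ω - 1) * (1 + ω + ω^2) = 0 := by linear_combination ω3
  rcases mul_eq_zero.1 h with h' | h'
  · exact absurd (sub_eq_zero.1 h') ω_ne
  · exact h'

noncomputable def e (x : Fin 3) : ℂ := ω ^ x.val

lemma ω_pow_mod (n : ℕ) : ω ^ (n % 3) = ω ^ n := by
  conv_rhs => rw [← Nat.div_add_mod n 3]
  rw [pow_add, pow_mul, ω3, one_pow, one_mul]

lemma e_add (x y : Fin 3) : e (x + y) = e x * e y := by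
  rw [e, e, e, Fin.val_add, ω_pow_mod, pow_add]

lemma e_zero : e 0 = 1 := rfl

lemma e_val (x : Fin 3) : e x = Complex.exp (2*(Real.pi:ℂ)*Complex.I*x.val/3) := by
  rw [e, ω_pow]

lemma star_e (x : Fin 3) : (starRingEnd ℂ) (e x) = e (-x) := by
  have h1 : e x * e (-x) = 1 := by rw [← e_add, add_neg_cancel, e_zero]
  have h2 : (starRingEnd ℂ) (e x) * e x = 1 := by
    rw [e_val, ← Complex.exp_conj, ← Complex.exp_add]
    rw [show (starRingEnd ℂ) (2*(Real.pi:ℂ)*Complex.I*x.val/3) = -(2*(Real.pi:ℂ)*Complex.I*x.val/3) by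
      simp [map_div₀, _root_.map_mul, map_ofNat, Complex.conj_I, Complex.conj_ofReal, map_natCast]; ring]
    simp
  calc (starRingEnd ℂ) (e x) = (starRingEnd ℂ) (e x) * (e x * e (-x)) := by rw [h1, mul_one]
    _ = ((starRingEnd ℂ) (e x) * e x) * e (-x) := by ring
    _ = e (-x) := by rw [h2, one_mul]

lemma e_one : e 1 = ω := pow_one ω

lemma e_two : e 2 = ω ^ 2 := rfl

lemma sum_e (c : Fin 3) : ∑ x : Fin 3, e (c * x) = if c = 0 then 3 else 0 := by
  fin_cases c
  · simp [Fin.sum_univ_three, e_zero]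
  · rw [Fin.sum_univ_three]
    norm_num [show ((1:Fin 3) * 0 : Fin 3) = 0 from rfl, show ((1:Fin 3) * 1 : Fin 3) = 1 from rfl,
      show ((1:Fin 3) * 2 : Fin 3) = 2 from rfl]
    show e 0 + e 1 + e 2 = 0
    rw [e_zero, e_one, e_two, hsum]
  · rw [Fin.sum_univ_three]
    norm_num [show ((2:Fin 3) * 0 : Fin 3) = 0 from rfl, show ((2:Fin 3) * 1 : Fin 3) = 2 from rfl,
      show ((2:Fin 3) * 2 : Fin 3) = 1 from rfl]
    show e 0 + e 2 + e 1 = 0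
    rw [e_zero, e_one, e_two]; linear_combination hsum


lemma sum_e_pair (a b : Fin 3) :
    ∑ r : Fin 3 × Fin 3, e (a * r.1) * e (b * r.2)
      = (if a = 0 then (3:ℂ) else 0) * (if b = 0 then (3:ℂ) else 0) := by
  rw [← sum_e a, ← sum_e b, Fintype.sum_prod_type]
  dsimp only
  rw [← Finset.sum_mul_sum]

lemma key (M : Matrix (Fin 3 × Fin 3) (Fin 3 × Fin 3) ℂ)
    (f a b c : Fin 3 × Fin 3 → Fin 3 × Fin 3 → Fin 3)
    (hM : ∀ p q, M p q = (1/3 : ℂ) * e (f p q))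
    (hf : ∀ p q r, f p r - f q r = c p q + (a p q * r.1 + b p q * r.2))
    (hab : ∀ p q, (a p q = 0 ∧ b p q = 0) ↔ p = q)
    (hc : ∀ p, c p p = 0) :
    M ∈ Matrix.unitaryGroup (Fin 3 × Fin 3) ℂ := by
  rw [Matrix.mem_unitaryGroup_iff]
  ext p q
  rw [Matrix.mul_apply, Matrix.one_apply]
  have h1 : ∀ r : Fin 3 × Fin 3,
      M p r * (star M) r q
        = ((1/9 : ℂ) * e (c p q)) * (e (a p q * r.1) * e (b p q * r.2)) := by
    intro r
    rw [Matrix.star_apply, hM, hM, Complex.star_def, _root_.map_mul, star_e]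
    have hconj : (starRingEnd ℂ) (1/3 : ℂ) = 1/3 := by
      rw [show ((1:ℂ)/3) = ((1/3 : ℝ) : ℂ) by norm_num, Complex.conj_ofReal]
    rw [hconj]
    have hd : f p r + -(f q r) = c p q + (a p q * r.1 + b p q * r.2) := by
      rw [← sub_eq_add_neg, hf]
    calc (1/3:ℂ) * e (f p r) * ((1/3:ℂ) * e (-(f q r)))
        = (1/9:ℂ) * (e (f p r) * e (-(f q r))) := by ring
      _ = (1/9:ℂ) * e (f p r + -(f q r)) := by rw [e_add]
      _ = (1/9:ℂ) * e (c p q + (a p q * r.1 + b p q * r.2)) := by rw [hd]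
      _ = ((1/9:ℂ) * e (c p q)) * (e (a p q * r.1) * e (b p q * r.2)) := by
            rw [e_add, e_add]; ring
  rw [Finset.sum_congr rfl (fun r _ => h1 r), ← Finset.mul_sum, sum_e_pair]
  by_cases hpq : p = q
  · subst hpq
    rw [if_pos rfl, if_pos ((hab p p).2 rfl).1, if_pos ((hab p p).2 rfl).2, hc, e_zero]
    norm_num
  · rw [if_neg hpq]
    by_cases ha : a p q = 0
    · have hb : b p q ≠ 0 := fun hb => hpq ((hab p q).1 ⟨ha, hb⟩)
      rw [if_neg hb]; ring
    · rw [if_neg ha]; ring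

def σ0 : Equiv.Perm (Fin 3 × Fin 3) where
  toFun q := (q.1 + q.2, q.1 + 2*q.2)
  invFun q := (2*q.1 + 2*q.2, 2*q.1 + q.2)
  left_inv := by decide
  right_inv := by decide

def Mat : Matrix (Fin 3 × Fin 3) (Fin 3 × Fin 3) ℂ :=
  (1 / 3 : ℂ) • (kron F3 F3 * permMatrix σ0)

lemma F3_e (j k : Fin 3) : F3 j k = e (j * k) := by
  rw [e, Fin.val_mul, ω_pow_mod, ω_pow, F3]
  congr 1
  push_cast
  ring

lemma Mat_apply (p q : Fin 3 × Fin 3) :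
    Mat p q = (1/3 : ℂ) * e (p.1 * (q.1 + q.2) + p.2 * (q.1 + 2*q.2)) := by
  rw [Mat, Matrix.smul_apply, Matrix.mul_apply]
  simp only [permMatrix, mul_ite, mul_one, mul_zero]
  rw [Finset.sum_ite_eq' Finset.univ (σ0 q) (fun r => kron F3 F3 p r)]
  simp only [Finset.mem_univ, if_true]
  have hσ : σ0 q = (q.1 + q.2, q.1 + 2*q.2) := rfl
  rw [hσ, kron, F3_e, F3_e, ← e_add]
  simp [smul_eq_mul]

lemma unit1 : Mat ∈ Matrix.unitaryGroup (Fin 3 × Fin 3) ℂ := by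
  refine key Mat (fun p q => p.1 * (q.1 + q.2) + p.2 * (q.1 + 2*q.2))
    (fun p q => (p.1 + p.2) - (q.1 + q.2))
    (fun p q => (p.1 + 2*p.2) - (q.1 + 2*q.2))
    (fun _ _ => 0)
    Mat_apply ?_ (by decide) (fun _ => rfl)
  intro p q r
  open Fin.CommRing in ring

lemma unit2 : reshuffle Mat ∈ Matrix.unitaryGroup (Fin 3 × Fin 3) ℂ := by
  refine key (reshuffle Mat) (fun p q => p.1 * (p.2 + q.2) + q.1 * (p.2 + 2*q.2))
    (fun p q => p.2 - q.2)
    (fun p q => p.1 - q.1)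
    (fun p q => p.1 * p.2 - q.1 * q.2)
    (fun p q => Mat_apply (p.1, q.1) (p.2, q.2)) ?_ (by decide) (fun _ => sub_self _)
  intro p q r
  open Fin.CommRing in ring

lemma unit3 : ptranspose Mat ∈ Matrix.unitaryGroup (Fin 3 × Fin 3) ℂ := by
  refine key (ptranspose Mat) (fun p q => p.1 * (q.1 + p.2) + q.2 * (q.1 + 2*p.2))
    (fun p q => p.1 - q.1)
    (fun p q => 2*(p.2 - q.2))
    (fun p q => p.1 * p.2 - q.1 * q.2)
    (fun p q => Mat_apply (p.1, q.2) (q.1, p.2)) ?_ (by decide) (fun _ => sub_self _)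
  intro p q r
  open Fin.CommRing in ring

end CHM9aux

/-- There exists a permutation `σ` of `Fin 3 × Fin 3` such that
`(1/3)·(F₃⊗F₃)·P_σ` is 2-unitary; i.e. there exists a 2-unitary complex
Hadamard matrix of order 9. -/
theorem exists_two_unitary_CHM_9 :
    ∃ σ : Equiv.Perm (Fin 3 × Fin 3),
      IsUnitary ((1 / 3 : ℂ) • (kron F3 F3 * permMatrix σ)) ∧
      IsUnitary (reshuffle ((1 / 3 : ℂ) • (kron F3 F3 * permMatrix σ))) ∧
      IsUnitary (ptranspose ((1 / 3 : ℂ) • (kron F3 F3 * permMatrix σ))) :=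
  ⟨CHM9aux.σ0, CHM9aux.unit1, CHM9aux.unit2, CHM9aux.unit3⟩
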